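/- Let U be a linear operator on ℂ^m ⊗ ℂ^n (identified with the space of m×n complex matrices via the vector–operator isomorphism). If ‖U v‖ = ‖v‖ for every separable vector v = a ⊗ b (with a ∈ ℂ^m, b ∈ ℂ^n), then U*U = I, i.e., U is unitary. -/

import Mathlib

noncomputable section

/-- The elementary tensor `a ⊗ b` in `ℂ^m ⊗ ℂ^n ≅ ℂ^(m×n)`. -/
def tens {m n : ℕ} (a : EuclideanSpace ℂ (Fin m)) (b : EuclideanSpace ℂ (Fin n)) :
    EuclideanSpace ℂ (Fin m × Fin n) :=
  WithLp.toLp 2 (fun p : Fin m × Fin n => a p.1 * b p.2)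

/-!
The form `(u, w) ↦ ⟪(U† U - 1) u, w⟫` vanishes at `u = w = a ⊗ b` by hypothesis. Since `⊗` is
bilinear and a complex sesquilinear form vanishing on the diagonal vanishes identically,
polarizing first in `a` and then in `b` makes it vanish at every pair of elementary tensors. These
include the standard basis vectors `eᵢ ⊗ eⱼ`, so `U† U - 1 = 0`.
-/

open scoped InnerProductSpace

section Polarization

variable {E F G : Type*} [AddCommGroup E] [Module ℂ E] [AddCommGroup F] [Module ℂ F]
  [SeminormedAddCommGroup G] [InnerProductSpace ℂ G]

theorem inner_map_map_eq_zero_of_forall_self {f g : E →ₗ[ℂ] G}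
    (h : ∀ x, ⟪f x, g x⟫_ℂ = 0) (x y : E) : ⟪f x, g y⟫_ℂ = 0 := by
  -- evaluating at `x + y` and `x + I • y` gives `⟪f x, g y⟫ ± ⟪f y, g x⟫ = 0`
  have hadd := h (x + y)
  have hIadd := h (x + Complex.I • y)
  simp only [map_add, map_smul, inner_add_left, inner_add_right, inner_smul_left,
    inner_smul_right, Complex.conj_I, h x, h y] at hadd hIadd
  linear_combination (1 / 2 : ℂ) * hadd - Complex.I / 2 * hIadd
    + (⟪f x, g y⟫_ℂ - ⟪f y, g x⟫_ℂ) / 2 * Complex.I_sq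

theorem inner_bilin_bilin_eq_zero_of_forall_self {B₁ B₂ : E →ₗ[ℂ] F →ₗ[ℂ] G}
    (h : ∀ x y, ⟪B₁ x y, B₂ x y⟫_ℂ = 0) (x x' : E) (y y' : F) :
    ⟪B₁ x y, B₂ x' y'⟫_ℂ = 0 := by
  have h_fst : ∀ y x x', ⟪B₁ x y, B₂ x' y⟫_ℂ = 0 := fun y =>
    inner_map_map_eq_zero_of_forall_self (f := B₁.flip y) (g := B₂.flip y) (h · y)
  exact inner_map_map_eq_zero_of_forall_self (f := B₁ x) (g := B₂ x') (h_fst · x x') y y'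

end Polarization

section ElementaryTensor

open EuclideanSpace

variable {m n : ℕ}

def tensₗ : EuclideanSpace ℂ (Fin m) →ₗ[ℂ] EuclideanSpace ℂ (Fin n) →ₗ[ℂ]
    EuclideanSpace ℂ (Fin m × Fin n) :=
  LinearMap.mk₂ ℂ tens
    (fun a a' b => by ext p; simp [tens, add_mul])
    (fun c a b => by ext p; simp [tens, mul_assoc])
    (fun a b b' => by ext p; simp [tens, mul_add])
    (fun c a b => by ext p; simp [tens, mul_left_comm])

@[simp]
theorem tensₗ_apply (a : EuclideanSpace ℂ (Fin m)) (b : EuclideanSpace ℂ (Fin n)) :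
    tensₗ a b = tens a b :=
  rfl

theorem tens_single_single (i : Fin m) (j : Fin n) :
    tens (single i (1 : ℂ)) (single j 1) = single (i, j) 1 := by
  ext p
  by_cases hi : p.1 = i <;> by_cases hj : p.2 = j <;>
    simp [tens, Prod.ext_iff, hi, hj]

theorem LinearMap.eq_zero_of_forall_inner_tens_self
    (T : EuclideanSpace ℂ (Fin m × Fin n) →ₗ[ℂ] EuclideanSpace ℂ (Fin m × Fin n))
    (h : ∀ a b, ⟪T (tens a b), tens a b⟫_ℂ = 0) : T = 0 := by
  have h_tens : ∀ a a' b b', ⟪T (tens a b), tens a' b'⟫_ℂ = 0 := by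
    simpa only [LinearMap.compr₂_apply, tensₗ_apply] using
      inner_bilin_bilin_eq_zero_of_forall_self (B₁ := tensₗ.compr₂ T) (B₂ := tensₗ)
        (by simpa only [LinearMap.compr₂_apply, tensₗ_apply] using h)
  let e := (basisFun (Fin m × Fin n) ℂ).toBasis
  refine e.ext fun ⟨i, j⟩ => InnerProductSpace.ext_inner_right_basis e fun ⟨k, l⟩ => ?_
  simp only [e, OrthonormalBasis.coe_toBasis, basisFun_apply, LinearMap.zero_apply,
    inner_zero_left, ← tens_single_single]
  exact h_tens _ _ _ _

end ElementaryTensor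

theorem stmt0 {m n : ℕ}
    (U : EuclideanSpace ℂ (Fin m × Fin n) →ₗ[ℂ] EuclideanSpace ℂ (Fin m × Fin n))
    (h : ∀ (a : EuclideanSpace ℂ (Fin m)) (b : EuclideanSpace ℂ (Fin n)),
      ‖U (tens a b)‖ = ‖tens a b‖) :
    LinearMap.adjoint U ∘ₗ U = LinearMap.id := by
  rw [← sub_eq_zero]
  refine LinearMap.eq_zero_of_forall_inner_tens_self _ fun a b => ?_
  rw [LinearMap.sub_apply, inner_sub_left, LinearMap.comp_apply, LinearMap.adjoint_inner_left,
    LinearMap.id_apply, inner_self_eq_norm_sq_to_K, inner_self_eq_norm_sq_to_K, h, sub_self]
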